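/- arXiv:1601.00255 — 2 statements merged into one kernel-verified Lean document; each statement's English description precedes it below -/
import Mathlib

section
/- Let x : ℝ → ℝ^N be a differentiable curve and e : ℝ → ℝ^m a continuous curve satisfying x'(t) = A x(t) + B e(t) for all t, where A is an N×N real matrix and B an N×m real matrix. Suppose P and Q are symmetric positive definite N×N real matrices satisfying the Lyapunov equation Aᵀ P + P A = −Q, and let λ_min(Q) > 0 denote the smallest eigenvalue of Q. Then for every t, d/dt ( x(t)ᵀ P x(t) ) ≤ −(λ_min(Q)/2) ‖x(t)‖² + (2/λ_min(Q)) ‖Bᵀ Pᵀ P B‖ ‖e(t)‖². -/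
open Matrix
open scoped RealInnerProductSpace

/-- Multiplication of a vector in Euclidean space by a real matrix. -/
noncomputable def matVec {a b : ℕ} (M : Matrix (Fin a) (Fin b) ℝ)
    (v : EuclideanSpace ℝ (Fin b)) : EuclideanSpace ℝ (Fin a) :=
  Matrix.toEuclideanLin M v

/-- The operator norm of a real matrix, induced by the Euclidean norms. -/
noncomputable def opNorm {a b : ℕ} (M : Matrix (Fin a) (Fin b) ℝ) : ℝ :=
  ‖LinearMap.toContinuousLinearMap (Matrix.toEuclideanLin M)‖

/-
The quadratic form `V = xᵀ P x` has derivative `2 xᵀ P (A x + B e)`, which the Lyapunov equation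
turns into `-xᵀ Q x + 2 ⟪x, P B e⟫`. The first term is at most `-λ_min(Q) ‖x‖²`; half of it
absorbs the cross term by Young's inequality `2 ⟪u, z⟫ ≤ (λ/2) ‖u‖² + (2/λ) ‖z‖²`, and
`‖P B e‖² = eᵀ (Bᵀ Pᵀ P B) e ≤ ‖Bᵀ Pᵀ P B‖ ‖e‖²`.
-/

section MatVec

variable {a b c : ℕ}

lemma matVec_mul (M : Matrix (Fin a) (Fin b) ℝ) (M' : Matrix (Fin b) (Fin c) ℝ)
    (v : EuclideanSpace ℝ (Fin c)) : matVec (M * M') v = matVec M (matVec M' v) := by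
  simp [matVec, Matrix.toLpLin_apply, Matrix.mulVec_mulVec]

lemma add_matVec (M M' : Matrix (Fin a) (Fin b) ℝ) (v : EuclideanSpace ℝ (Fin b)) :
    matVec (M + M') v = matVec M v + matVec M' v := by
  simp [matVec]

lemma matVec_add (M : Matrix (Fin a) (Fin b) ℝ) (v w : EuclideanSpace ℝ (Fin b)) :
    matVec M (v + w) = matVec M v + matVec M w :=
  map_add _ v w

lemma inner_matVec_left (M : Matrix (Fin a) (Fin b) ℝ) (u : EuclideanSpace ℝ (Fin b))
    (v : EuclideanSpace ℝ (Fin a)) : ⟪matVec M u, v⟫ = ⟪u, matVec Mᵀ v⟫ := by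
  rw [matVec, matVec, ← conjTranspose_eq_transpose_of_trivial,
    toEuclideanLin_conjTranspose_eq_adjoint, LinearMap.adjoint_inner_right]

lemma inner_matVec_comm_of_isHermitian {M : Matrix (Fin a) (Fin a) ℝ} (hM : M.IsHermitian)
    (u v : EuclideanSpace ℝ (Fin a)) : ⟪matVec M u, v⟫ = ⟪u, matVec M v⟫ :=
  isSymmetric_toEuclideanLin_iff.mpr hM u v

lemma norm_matVec_le (M : Matrix (Fin a) (Fin b) ℝ) (v : EuclideanSpace ℝ (Fin b)) :
    ‖matVec M v‖ ≤ opNorm M * ‖v‖ :=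
  (LinearMap.toContinuousLinearMap (toEuclideanLin M)).le_opNorm v

lemma norm_matVec_sq_le (M : Matrix (Fin a) (Fin b) ℝ) (v : EuclideanSpace ℝ (Fin b)) :
    ‖matVec M v‖ ^ 2 ≤ opNorm (Mᵀ * M) * ‖v‖ ^ 2 :=
  calc ‖matVec M v‖ ^ 2 = ⟪v, matVec (Mᵀ * M) v⟫ := by
        rw [← real_inner_self_eq_norm_sq, inner_matVec_left, matVec_mul]
    _ ≤ ‖v‖ * ‖matVec (Mᵀ * M) v‖ := real_inner_le_norm _ _
    _ ≤ ‖v‖ * (opNorm (Mᵀ * M) * ‖v‖) := by gcongr; exact norm_matVec_le _ _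
    _ = opNorm (Mᵀ * M) * ‖v‖ ^ 2 := by ring

end MatVec

lemma mul_norm_sq_le_inner_matVec {n : ℕ} {Q : Matrix (Fin n) (Fin n) ℝ} (hQ : Q.IsHermitian)
    {lam : ℝ} (hlam : ∀ i, lam ≤ hQ.eigenvalues i) (v : EuclideanSpace ℝ (Fin n)) :
    lam * ‖v‖ ^ 2 ≤ ⟪v, matVec Q v⟫ := by
  set b := hQ.eigenvectorBasis
  have hQb (i : Fin n) : ⟪b i, matVec Q v⟫ = hQ.eigenvalues i * ⟪b i, v⟫ := by
    rw [← inner_matVec_comm_of_isHermitian hQ, matVec, toLpLin_apply, WithLp.ofLp_toLp,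
      hQ.mulVec_eigenvectorBasis, WithLp.toLp_smul, WithLp.toLp_ofLp, real_inner_smul_left]
  calc lam * ‖v‖ ^ 2 = ∑ i, lam * ⟪b i, v⟫ ^ 2 := by
        rw [← real_inner_self_eq_norm_sq, ← b.sum_inner_mul_inner, Finset.mul_sum]
        simp_rw [real_inner_comm v, sq]
    _ ≤ ∑ i, hQ.eigenvalues i * ⟪b i, v⟫ ^ 2 := by
        gcongr with i; exact hlam i
    _ = ⟪v, matVec Q v⟫ := by
        rw [← b.sum_inner_mul_inner]
        refine Finset.sum_congr rfl fun i _ => ?_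
        rw [hQb, real_inner_comm v]
        ring

lemma HasDerivAt.inner_matVec_self {n : ℕ} {P : Matrix (Fin n) (Fin n) ℝ} (hP : P.IsHermitian)
    {x : ℝ → EuclideanSpace ℝ (Fin n)} {x' : EuclideanSpace ℝ (Fin n)} {t : ℝ}
    (hx : HasDerivAt x x' t) :
    HasDerivAt (fun s => ⟪x s, matVec P (x s)⟫) (2 * ⟪x t, matVec P x'⟫) t := by
  have hPx : HasDerivAt (fun s => matVec P (x s)) (matVec P x') t :=
    (toEuclideanLin P).toContinuousLinearMap.hasFDerivAt.comp_hasDerivAt t hx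
  refine (hx.inner ℝ hPx).congr_deriv ?_
  rw [← inner_matVec_comm_of_isHermitian hP x', real_inner_comm (x t)]
  ring

lemma inner_matVec_transpose_mul_add_mul {n : ℕ} {P : Matrix (Fin n) (Fin n) ℝ}
    (hP : P.IsHermitian) (A : Matrix (Fin n) (Fin n) ℝ) (u : EuclideanSpace ℝ (Fin n)) :
    ⟪u, matVec (Aᵀ * P + P * A) u⟫ = 2 * ⟪u, matVec (P * A) u⟫ := by
  rw [add_matVec, inner_add_right, matVec_mul, matVec_mul, ← inner_matVec_left,
    ← inner_matVec_comm_of_isHermitian hP, real_inner_comm u]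
  ring

lemma two_mul_inner_le {E : Type*} [NormedAddCommGroup E] [InnerProductSpace ℝ E]
    {c : ℝ} (hc : 0 < c) (u z : E) :
    2 * ⟪u, z⟫ ≤ c / 2 * ‖u‖ ^ 2 + 2 / c * ‖z‖ ^ 2 := by
  have hsq : 0 ≤ (c * ‖u‖ - 2 * ‖z‖) ^ 2 / (2 * c) := by positivity
  have hexp : (c * ‖u‖ - 2 * ‖z‖) ^ 2 / (2 * c)
      = c / 2 * ‖u‖ ^ 2 + 2 / c * ‖z‖ ^ 2 - 2 * (‖u‖ * ‖z‖) := by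
    field_simp
    ring
  linarith [real_inner_le_norm u z]

theorem lyapunov_derivative_bound_general {N m : ℕ}
    (A P Q : Matrix (Fin N) (Fin N) ℝ) (B : Matrix (Fin N) (Fin m) ℝ)
    (hP : P.PosDef) (hQ : Q.PosDef)
    (hLyap : Aᵀ * P + P * A = -Q)
    (lamQ : ℝ) (hlamQ : IsLeast (Set.range hQ.1.eigenvalues) lamQ) (hlamQpos : 0 < lamQ)
    (x : ℝ → EuclideanSpace ℝ (Fin N)) (e : ℝ → EuclideanSpace ℝ (Fin m))
    (hx : ∀ t, HasDerivAt x (matVec A (x t) + matVec B (e t)) t)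
    (t : ℝ) :
    deriv (fun s => ⟪x s, matVec P (x s)⟫) t ≤
      -(lamQ / 2) * ‖x t‖ ^ 2 + (2 / lamQ) * opNorm (Bᵀ * Pᵀ * P * B) * ‖e t‖ ^ 2 := by
  set u := x t
  set z := matVec (P * B) (e t)
  have hderiv : deriv (fun s => ⟪x s, matVec P (x s)⟫) t = -⟪u, matVec Q u⟫ + 2 * ⟪u, z⟫ := by
    have hQform : ⟪u, matVec Q u⟫ = -(2 * ⟪u, matVec (P * A) u⟫) := by
      rw [← inner_matVec_transpose_mul_add_mul hP.1, hLyap]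
      simp [matVec]
    rw [((hx t).inner_matVec_self hP.1).deriv, hQform, matVec_add, inner_add_right,
      ← matVec_mul, ← matVec_mul]
    ring
  have hRayleigh : lamQ * ‖u‖ ^ 2 ≤ ⟪u, matVec Q u⟫ :=
    mul_norm_sq_le_inner_matVec hQ.1 (fun i => hlamQ.2 ⟨i, rfl⟩) u
  have hzBound : ‖z‖ ^ 2 ≤ opNorm (Bᵀ * Pᵀ * P * B) * ‖e t‖ ^ 2 := by
    simpa only [transpose_mul, Matrix.mul_assoc] using norm_matVec_sq_le (P * B) (e t)
  have hzScaled := mul_le_mul_of_nonneg_left hzBound (by positivity : 0 ≤ 2 / lamQ)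
  linarith [two_mul_inner_le hlamQpos u z]

/-- If `x' = A x + B e`, `P, Q ≻ 0` are symmetric with `Aᵀ P + P A = -Q`, and `λ_min(Q)`
is the smallest eigenvalue of `Q`, then
`d/dt (xᵀ P x) ≤ -(λ_min(Q)/2) ‖x‖² + (2/λ_min(Q)) ‖Bᵀ Pᵀ P B‖ ‖e‖²`. -/
theorem lyapunov_derivative_bound {N m : ℕ}
    (A P Q : Matrix (Fin N) (Fin N) ℝ) (B : Matrix (Fin N) (Fin m) ℝ)
    (hP : P.PosDef) (hQ : Q.PosDef)
    (hLyap : Aᵀ * P + P * A = -Q)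
    (lamQ : ℝ) (hlamQ : IsLeast (Set.range hQ.1.eigenvalues) lamQ) (hlamQpos : 0 < lamQ)
    (x : ℝ → EuclideanSpace ℝ (Fin N)) (e : ℝ → EuclideanSpace ℝ (Fin m))
    (he : Continuous e)
    (hx : ∀ t, HasDerivAt x (matVec A (x t) + matVec B (e t)) t)
    (t : ℝ) :
    deriv (fun s => ⟪x s, matVec P (x s)⟫) t ≤
      -(lamQ / 2) * ‖x t‖ ^ 2 + (2 / lamQ) * opNorm (Bᵀ * Pᵀ * P * B) * ‖e t‖ ^ 2 :=
  lyapunov_derivative_bound_general A P Q B hP hQ hLyap lamQ hlamQ hlamQpos x e hx t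
end

section
/- (Positive lower bound on the inter-event time, Theorem 2.) Let M₁, M₂, M₃ > 0 be constants and let u : [0, ∞) → ℝ be a differentiable function with u(0) = 0 and u'(t) ≤ M₁ u(t)² + M₃ u(t) + M₂ for all t ≥ 0. Fix a threshold θ > 0 and set τ₀ = θ / (M₁ θ² + M₃ θ + M₂) > 0. Then u(t) < θ for all t ∈ [0, τ₀); in particular, the first time at which u reaches the value θ is bounded below by the positive constant τ₀, so the inter-event time of the event-triggered scheme is strictly positive. -/
/-!
Let `K = M₁ θ² + M₃ θ + M₂`, so that `τ₀ = θ / K`. The line `r ↦ K r` is a barrier for `u`: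
wherever `u` touches it at a time `r < τ₀`, the value `u r = K r` lies in `[0, θ)`, where the
quadratic bound is strictly below its value `K` at `θ`, so `u` crosses the line downwards. Hence
`u t ≤ K t < K τ₀ = θ` on `[0, τ₀)`.
-/

open Set

lemma quadratic_lt_quadratic_of_nonneg_of_lt {M₁ M₂ M₃ v θ : ℝ} (hM₁ : 0 ≤ M₁) (hM₃ : 0 < M₃)
    (hv : 0 ≤ v) (hvθ : v < θ) :
    M₁ * v ^ 2 + M₃ * v + M₂ < M₁ * θ ^ 2 + M₃ * θ + M₂ := by
  have hsq : M₁ * v ^ 2 ≤ M₁ * θ ^ 2 := by gcongr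
  have hlin : M₃ * v < M₃ * θ := by gcongr
  linarith

lemma le_mul_of_hasDerivAt_of_lt {f f' : ℝ → ℝ} {K t : ℝ}
    (hf : ∀ x ∈ Icc 0 t, HasDerivAt f (f' x) x) (h0 : f 0 ≤ 0)
    (bound : ∀ x ∈ Ico 0 t, f x = K * x → f' x < K) : ∀ x ∈ Icc 0 t, f x ≤ K * x :=
  image_le_of_deriv_right_lt_deriv_boundary (B := (K * ·)) (B' := fun _ => K)
    (fun x hx => (hf x hx).continuousAt.continuousWithinAt)
    (fun x hx => (hf x (Ico_subset_Icc_self hx)).hasDerivWithinAt) (by simpa using h0)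
    (fun x => by simpa using (hasDerivAt_id x).const_mul K) bound

/-- Positive lower bound on the inter-event time (Theorem 2): if `u(0) = 0` and
`u' ≤ M₁ u² + M₃ u + M₂` on `[0, ∞)` with `M₁, M₂, M₃ > 0`, and `θ > 0`, then with
`τ₀ = θ / (M₁ θ² + M₃ θ + M₂)` one has `τ₀ > 0` and `u(t) < θ` for all `t ∈ [0, τ₀)`;
hence the first hitting time of the threshold `θ` is at least `τ₀ > 0`. -/
theorem inter_event_time_positive_lower_bound (M₁ M₂ M₃ : ℝ)
    (hM₁ : 0 < M₁) (hM₂ : 0 < M₂) (hM₃ : 0 < M₃)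
    (u u' : ℝ → ℝ) (hu0 : u 0 = 0)
    (hu : ∀ t, 0 ≤ t → HasDerivAt u (u' t) t)
    (hub : ∀ t, 0 ≤ t → u' t ≤ M₁ * u t ^ 2 + M₃ * u t + M₂)
    (θ : ℝ) (hθ : 0 < θ)
    (τ₀ : ℝ) (hτ₀ : τ₀ = θ / (M₁ * θ ^ 2 + M₃ * θ + M₂)) :
    0 < τ₀ ∧ ∀ t, 0 ≤ t → t < τ₀ → u t < θ := by
  set K := M₁ * θ ^ 2 + M₃ * θ + M₂
  have hK : 0 < K := by positivity
  have hKτ₀ : K * τ₀ = θ := by rw [hτ₀]; field_simp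
  refine ⟨by rw [hτ₀]; positivity, fun t ht htτ₀ => ?_⟩
  have below_barrier : ∀ x ∈ Icc 0 t, u x ≤ K * x := by
    refine le_mul_of_hasDerivAt_of_lt (fun x hx => hu x hx.1) hu0.le fun x hx hux => ?_
    have hux_lt : u x < θ := by rw [hux, ← hKτ₀]; gcongr; exact hx.2.trans htτ₀
    calc u' x ≤ M₁ * u x ^ 2 + M₃ * u x + M₂ := hub x hx.1
      _ < K := quadratic_lt_quadratic_of_nonneg_of_lt hM₁.le hM₃
        (hux ▸ mul_nonneg hK.le hx.1) hux_lt
  calc u t ≤ K * t := below_barrier t ⟨ht, le_rfl⟩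
    _ < K * τ₀ := by gcongr
    _ = θ := hKτ₀
end
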